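/- arXiv:1212.0139 — 4 statements merged into one kernel-verified Lean document; each statement's English description precedes it below -/
import Mathlib

section
/- For every integer λ ≥ 2, E(N_{1:λ+1}²) > E(N_{1:λ}²), i.e. the second moment of the minimum of λ i.i.d. standard normal random variables is strictly increasing in λ for λ ≥ 2. -/
open MeasureTheory ProbabilityTheory Filter Real

/-- Law of the minimum (first order statistic) of `lam` i.i.d. standard normal
random variables. -/
noncomputable def minLaw (lam : ℕ) : Measure ℝ :=
  (Measure.pi fun _ : Fin lam => gaussianReal 0 1).map fun x => ⨅ i, x i

instance (lam : ℕ) : IsProbabilityMeasure (minLaw lam) := by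
  unfold minLaw
  exact Measure.isProbabilityMeasure_map
    ((Measurable.iInf fun i => measurable_pi_apply i).aemeasurable)

/-- Law of the selected step `(N_{1:λ}, N_2, …, N_n)`: independent coordinates, the
first coordinate distributed as the minimum of `lam` i.i.d. standard normals and the
other `n - 1` coordinates standard normal. -/
noncomputable def xiLaw (n lam : ℕ) : Measure (Fin n → ℝ) :=
  Measure.pi fun i => if (i : ℕ) = 0 then minLaw lam else gaussianReal 0 1

/-!
Since `N_{1:λ}² ≥ 0`, its second moment is `∫₀^∞ P(N_{1:λ}² > t) dt`. For `t = s²` with `s > 0`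
and `p = P(N > s) ∈ (0, 1/2)`, independence and the symmetry of `N` give
`P(N_{1:λ}² > s²) = P(N_{1:λ} < -s) + P(N_{1:λ} > s) = 1 - (1 - p)^λ + p^λ`,
whose increment from `λ` to `λ + 1` is `p (1 - p) ((1 - p)^(λ-1) - p^(λ-1)) > 0` once `λ ≥ 2`.
So the tails, and hence the second moments, strictly increase.
-/

open Set
open scoped NNReal

section MinOfIndependent

variable {ι : Type*} [Fintype ι] [Nonempty ι]

lemma lt_iInf_iff_of_finite (x : ι → ℝ) (t : ℝ) : t < ⨅ i, x i ↔ ∀ i, t < x i := by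
  obtain ⟨j, hj⟩ := exists_eq_ciInf_of_finite (f := x)
  exact ⟨fun h i => h.trans_le (ciInf_le (finite_range x).bddBelow i), fun h => hj ▸ h j⟩

lemma iInf_sq_le_sum_sq (x : ι → ℝ) : (⨅ i, x i) ^ 2 ≤ ∑ i, x i ^ 2 := by
  obtain ⟨j, hj⟩ := exists_eq_ciInf_of_finite (f := x)
  rw [← hj]
  exact Finset.single_le_sum (fun i _ => sq_nonneg (x i)) (Finset.mem_univ j)

variable (μ : ι → Measure ℝ)

lemma map_iInf_pi_Ioi [∀ i, SigmaFinite (μ i)] (t : ℝ) :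
    (Measure.pi μ).map (fun x => ⨅ i, x i) (Ioi t) = ∏ i, μ i (Ioi t) := by
  rw [Measure.map_apply (by fun_prop) measurableSet_Ioi, ← Measure.pi_pi]
  congr 1
  ext x
  simp only [mem_preimage, mem_Ioi, mem_univ_pi, lt_iInf_iff_of_finite]

lemma map_iInf_pi_Ici [∀ i, SigmaFinite (μ i)] (t : ℝ) :
    (Measure.pi μ).map (fun x => ⨅ i, x i) (Ici t) = ∏ i, μ i (Ici t) := by
  rw [Measure.map_apply (by fun_prop) measurableSet_Ici, ← Measure.pi_pi]
  congr 1
  ext x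
  simp only [mem_preimage, mem_Ici, mem_univ_pi]
  exact le_ciInf_iff (finite_range x).bddBelow

lemma integrable_sq_map_iInf_pi [∀ i, IsFiniteMeasure (μ i)]
    (hμ : ∀ i, Integrable (fun x => x ^ 2) (μ i)) :
    Integrable (fun x => x ^ 2) ((Measure.pi μ).map fun x => ⨅ i, x i) := by
  rw [integrable_map_measure (by fun_prop) (by fun_prop)]
  refine (integrable_finsetSum Finset.univ fun i _ => integrable_comp_eval (hμ i)).mono'
    (by fun_prop) (Eventually.of_forall fun x => ?_)
  simpa using iInf_sq_le_sum_sq x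

end MinOfIndependent

lemma measureReal_setOf_sq_lt_sq (μ : Measure ℝ) [IsFiniteMeasure μ] {s : ℝ} (hs : 0 ≤ s) :
    μ.real {x | s ^ 2 < x ^ 2} = μ.real (Iio (-s)) + μ.real (Ioi s) := by
  have hset : {x : ℝ | s ^ 2 < x ^ 2} = Iio (-s) ∪ Ioi s := by
    ext x
    simp only [mem_ofPred_eq, sq_lt_sq, abs_of_nonneg hs, lt_abs, mem_union, mem_Iio, mem_Ioi]
    constructor <;> rintro (h | h) <;> first | (left; linarith) | (right; linarith)
  rw [hset, measureReal_union ((Iic_disjoint_Ioi (by linarith)).mono_left Iio_subset_Iic_self)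
    measurableSet_Ioi]

lemma integral_lt_integral_of_measure_gt_lt {α : Type*} [MeasurableSpace α] {μ ν : Measure α}
    {f : α → ℝ} (hfμ : Integrable f μ) (hfν : Integrable f ν) (hf : 0 ≤ f)
    (h : ∀ t > 0, μ {x | t < f x} < ν {x | t < f x}) :
    ∫ x, f x ∂μ < ∫ x, f x ∂ν := by
  have hμ_fin := hfμ.lintegral_lt_top.ne
  have hν_fin := hfν.lintegral_lt_top.ne
  rw [integral_eq_lintegral_of_nonneg_ae (.of_forall hf) hfμ.1,
    integral_eq_lintegral_of_nonneg_ae (.of_forall hf) hfν.1,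
    ENNReal.toReal_lt_toReal hμ_fin hν_fin,
    lintegral_eq_lintegral_meas_lt μ (.of_forall hf) hfμ.aemeasurable,
    lintegral_eq_lintegral_meas_lt ν (.of_forall hf) hfν.aemeasurable]
  rw [lintegral_eq_lintegral_meas_lt μ (.of_forall hf) hfμ.aemeasurable] at hμ_fin
  refine setLIntegral_strict_mono measurableSet_Ioi (by simp) ?_ hμ_fin (.of_forall h)
  exact Antitone.measurable fun s t hst => measure_mono fun x hx => hst.trans_lt hx

section Gaussian

variable {v : ℝ≥0}

lemma gaussianReal_real_Iio_neg (t : ℝ) :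
    (gaussianReal 0 v).real (Iio (-t)) = (gaussianReal 0 v).real (Ioi t) := by
  conv_lhs => rw [← neg_zero, ← gaussianReal_map_neg]
  rw [map_measureReal_apply measurable_neg measurableSet_Iio]
  simp

lemma gaussianReal_real_Ioi_pos (hv : v ≠ 0) (t : ℝ) : 0 < (gaussianReal 0 v).real (Ioi t) :=
  have := (gaussianReal_absolutelyContinuous' 0 hv).isOpenPosMeasure
  ENNReal.toReal_pos (Measure.measure_Ioi_pos _ t).ne' (by finiteness)

lemma gaussianReal_real_Ioi_lt_half (hv : v ≠ 0) {t : ℝ} (ht : 0 < t) :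
    (gaussianReal 0 v).real (Ioi t) < 1 / 2 := by
  have := (gaussianReal_absolutelyContinuous' 0 hv).isOpenPosMeasure
  have hcompl : (gaussianReal 0 v).real (Iic t) = 1 - (gaussianReal 0 v).real (Ioi t) := by
    rw [← compl_Ioi, probReal_compl_eq_one_sub measurableSet_Ioi]
  have hsplit : (gaussianReal 0 v).real (Iic t) =
      (gaussianReal 0 v).real (Iio (-t)) + (gaussianReal 0 v).real (Icc (-t) t) := by
    rw [← Iio_union_Icc_eq_Iic (a := -t) (by linarith), measureReal_union
      ((Iio_disjoint_Ici le_rfl).mono_right Icc_subset_Ici_self) measurableSet_Icc]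
  have hmid : 0 < (gaussianReal 0 v).real (Icc (-t) t) :=
    ENNReal.toReal_pos ((Measure.measure_Ioo_pos _ |>.2 (by linarith)).trans_le
      (measure_mono Ioo_subset_Icc_self)).ne' (by finiteness)
  rw [gaussianReal_real_Iio_neg] at hsplit
  linarith

end Gaussian

section MinLaw

variable {lam : ℕ}

lemma integrable_sq_minLaw (hlam : lam ≠ 0) : Integrable (fun x => x ^ 2) (minLaw lam) :=
  have : NeZero lam := ⟨hlam⟩
  integrable_sq_map_iInf_pi _ fun _ => (memLp_id_gaussianReal 2).integrable_sq

lemma minLaw_real_Ioi (hlam : lam ≠ 0) (t : ℝ) :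
    (minLaw lam).real (Ioi t) = (gaussianReal 0 1).real (Ioi t) ^ lam := by
  have : NeZero lam := ⟨hlam⟩
  simp [measureReal_def, minLaw, map_iInf_pi_Ioi]

lemma minLaw_real_Iio_neg (hlam : lam ≠ 0) (t : ℝ) :
    (minLaw lam).real (Iio (-t)) = 1 - (1 - (gaussianReal 0 1).real (Ioi t)) ^ lam := by
  have : NeZero lam := ⟨hlam⟩
  have hIci : (minLaw lam).real (Ici (-t)) = (gaussianReal 0 1).real (Ici (-t)) ^ lam := by
    simp [measureReal_def, minLaw, map_iInf_pi_Ici]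
  rw [← compl_Ici, probReal_compl_eq_one_sub measurableSet_Ici, hIci, ← compl_Iio,
    probReal_compl_eq_one_sub measurableSet_Iio, gaussianReal_real_Iio_neg]

lemma minLaw_real_setOf_sq_lt_sq (hlam : lam ≠ 0) {s : ℝ} (hs : 0 ≤ s) :
    (minLaw lam).real {x | s ^ 2 < x ^ 2} =
      1 - (1 - (gaussianReal 0 1).real (Ioi s)) ^ lam + (gaussianReal 0 1).real (Ioi s) ^ lam := by
  rw [measureReal_setOf_sq_lt_sq _ hs, minLaw_real_Iio_neg hlam, minLaw_real_Ioi hlam]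

lemma one_sub_one_sub_pow_add_pow_lt_succ {n : ℕ} (hn : 2 ≤ n) {p : ℝ} (hp : 0 < p)
    (hp' : p < 1 - p) : 1 - (1 - p) ^ n + p ^ n < 1 - (1 - p) ^ (n + 1) + p ^ (n + 1) := by
  obtain ⟨k, rfl⟩ := Nat.exists_eq_add_of_le' hn
  have hpow : p ^ (k + 1) < (1 - p) ^ (k + 1) := pow_lt_pow_left₀ hp' hp.le k.succ_ne_zero
  have hinc : (1 - (1 - p) ^ (k + 2 + 1) + p ^ (k + 2 + 1)) - (1 - (1 - p) ^ (k + 2) + p ^ (k + 2))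
      = p * (1 - p) * ((1 - p) ^ (k + 1) - p ^ (k + 1)) := by ring
  have := mul_pos (mul_pos hp (hp.trans hp')) (sub_pos.2 hpow)
  linarith

lemma minLaw_setOf_lt_sq_lt_succ (hlam : 2 ≤ lam) {t : ℝ} (ht : 0 < t) :
    minLaw lam {x | t < x ^ 2} < minLaw (lam + 1) {x | t < x ^ 2} := by
  obtain ⟨s, hs, rfl⟩ : ∃ s, 0 < s ∧ s ^ 2 = t := ⟨√t, sqrt_pos.2 ht, sq_sqrt ht.le⟩
  rw [← ENNReal.toReal_lt_toReal (by finiteness) (by finiteness), ← measureReal_def,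
    ← measureReal_def, minLaw_real_setOf_sq_lt_sq (by omega) hs.le,
    minLaw_real_setOf_sq_lt_sq (by omega) hs.le]
  exact one_sub_one_sub_pow_add_pow_lt_succ hlam (gaussianReal_real_Ioi_pos one_ne_zero s)
    (by linarith [gaussianReal_real_Ioi_lt_half one_ne_zero hs])

end MinLaw

/-- For every `λ ≥ 2`, `E(N_{1:λ+1}²) > E(N_{1:λ}²)`: the second
moment of the minimum of `λ` i.i.d. standard normals is strictly increasing in `λ`. -/
theorem stmt_2 (lam : ℕ) (hlam : 2 ≤ lam) :
    (∫ x, x ^ 2 ∂(minLaw lam)) < ∫ x, x ^ 2 ∂(minLaw (lam + 1)) :=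
  integral_lt_integral_of_measure_gt_lt (integrable_sq_minLaw (by omega))
    (integrable_sq_minLaw (by omega)) (fun x => sq_nonneg x)
    fun _ ht => minLaw_setOf_lt_sq_lt_succ hlam ht
end

section
/- Let n ≥ 1, λ ∈ {1, 2}, d_σ > 0, σ_0 > 0. Let (ξ_t)_{t∈ℕ} be i.i.d. ℝⁿ-valued random vectors, each distributed as the vector (N_{1:λ}, N_2, …, N_n) with independent coordinates, first coordinate distributed as the minimum of λ i.i.d. standard normals and the other n−1 coordinates standard normal. Define W_t = (1/(2 d_σ)) (‖ξ_t‖²/n − 1), so that ln σ_{t+1} = ln σ_t + W_t. Then the (W_t) are i.i.d. with E(W_t) = 0 for every t, i.e. ln σ_t performs an additive unbiased random walk. -/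
open MeasureTheory ProbabilityTheory Filter Real

/-!
Each `W_t` is one fixed measurable function of `ξ_t`, so the `W_t` inherit independence and
identical distribution from the `ξ_t`, and `E W_t = 0` amounts to `E ‖ξ_t‖² = n`, i.e. to every
coordinate of `ξ_t` having second moment `1`. For standard normals this is their variance. For
`N_{1:2} = min (N₁, N₂)` it follows from `min² + max² = N₁² + N₂²` together with the symmetry of
the normal law, which makes `max (N₁, N₂) = -min (-N₁, -N₂)` have the same second moment as the
minimum.
-/

open scoped NNReal

lemma integral_sq_gaussianReal_zero (v : ℝ≥0) : ∫ x, x ^ 2 ∂gaussianReal 0 v = v := by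
  have h := variance_of_integral_eq_zero (μ := gaussianReal 0 v) aemeasurable_id
    integral_id_gaussianReal
  rw [variance_id_gaussianReal] at h
  exact h.symm

lemma iInf_fin_two {α : Type*} [ConditionallyCompleteLattice α] (x : Fin 2 → α) :
    ⨅ i, x i = x 0 ⊓ x 1 := by
  refine le_antisymm (le_inf (ciInf_le (Set.finite_range x).bddBelow 0)
    (ciInf_le (Set.finite_range x).bddBelow 1)) (le_ciInf fun i => ?_)
  fin_cases i
  · exact inf_le_left
  · exact inf_le_right

lemma minLaw_one : minLaw 1 = gaussianReal 0 1 := by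
  have : (fun x : Fin 1 → ℝ => ⨅ i, x i) = Function.eval 0 := funext fun x => ciInf_unique
  rw [minLaw, this, (measurePreserving_eval _ 0).map_eq]

lemma minLaw_two :
    minLaw 2 = (Measure.pi fun _ : Fin 2 => gaussianReal 0 1).map fun x => x 0 ⊓ x 1 := by
  rw [minLaw, funext iInf_fin_two]

section SymmetricLaw

variable {μ : Measure ℝ} [IsProbabilityMeasure μ]

lemma memLp_min_fin_two (h : MemLp id 2 μ) :
    MemLp (fun x : Fin 2 → ℝ => x 0 ⊓ x 1) 2 (Measure.pi fun _ => μ) :=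
  (h.comp_measurePreserving (measurePreserving_eval _ 0)).inf
    (h.comp_measurePreserving (measurePreserving_eval _ 1))

lemma integral_sq_min_fin_two (hμ : μ.map (fun x => -x) = μ) (h : MemLp id 2 μ) :
    ∫ x, (x 0 ⊓ x 1) ^ 2 ∂Measure.pi (fun _ : Fin 2 => μ) = ∫ y, y ^ 2 ∂μ := by
  set P := Measure.pi fun _ : Fin 2 => μ
  have hneg : MeasurePreserving (MeasurableEquiv.neg (Fin 2 → ℝ)) P P :=
    measurePreserving_pi _ _ fun _ => ⟨measurable_neg, hμ⟩
  have hcoordLp : ∀ i, MemLp (fun x : Fin 2 → ℝ => x i) 2 P := fun i =>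
    h.comp_measurePreserving (measurePreserving_eval _ i)
  have hmin_int : Integrable (fun x : Fin 2 → ℝ => (x 0 ⊓ x 1) ^ 2) P :=
    (memLp_min_fin_two h).integrable_sq
  have hmax_int : Integrable (fun x : Fin 2 → ℝ => (x 0 ⊔ x 1) ^ 2) P :=
    ((hcoordLp 0).sup (hcoordLp 1)).integrable_sq
  have hcoord : ∀ i, ∫ x, x i ^ 2 ∂P = ∫ y, y ^ 2 ∂μ := fun i =>
    integral_comp_eval (f := fun y => y ^ 2) (by fun_prop)
  have hmax_eq_min : ∫ x, (x 0 ⊔ x 1) ^ 2 ∂P = ∫ x, (x 0 ⊓ x 1) ^ 2 ∂P := by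
    rw [← hneg.integral_comp']
    congr 1 with x
    simp [max_neg_neg]
  have hsum : ∀ x : Fin 2 → ℝ, (x 0 ⊓ x 1) ^ 2 + (x 0 ⊔ x 1) ^ 2 = x 0 ^ 2 + x 1 ^ 2 := by
    intro x
    rcases le_total (x 0) (x 1) with h | h <;> simp [h, add_comm]
  have htotal : ∫ x, ((x 0 ⊓ x 1) ^ 2 + (x 0 ⊔ x 1) ^ 2) ∂P = 2 * ∫ y, y ^ 2 ∂μ := by
    simp_rw [hsum]
    rw [integral_add (hcoordLp 0).integrable_sq (hcoordLp 1).integrable_sq, hcoord, hcoord]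
    ring
  rw [integral_add hmin_int hmax_int, hmax_eq_min] at htotal
  linarith

end SymmetricLaw

lemma map_neg_gaussianReal_zero (v : ℝ≥0) :
    (gaussianReal 0 v).map (fun x => -x) = gaussianReal 0 v := by
  rw [gaussianReal_map_neg, neg_zero]

lemma memLp_id_minLaw {lam : ℕ} (hlam : lam = 1 ∨ lam = 2) : MemLp id 2 (minLaw lam) := by
  rcases hlam with rfl | rfl
  · rw [minLaw_one]
    exact memLp_id_gaussianReal 2
  · rw [minLaw_two, memLp_map_measure_iff aestronglyMeasurable_id (by fun_prop)]
    exact memLp_min_fin_two (memLp_id_gaussianReal 2)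

lemma integral_sq_minLaw {lam : ℕ} (hlam : lam = 1 ∨ lam = 2) :
    ∫ y, y ^ 2 ∂minLaw lam = 1 := by
  rcases hlam with rfl | rfl
  · rw [minLaw_one, integral_sq_gaussianReal_zero, NNReal.coe_one]
  · rw [minLaw_two, integral_map (by fun_prop) (by fun_prop),
      integral_sq_min_fin_two (map_neg_gaussianReal_zero 1) (memLp_id_gaussianReal 2),
      integral_sq_gaussianReal_zero, NNReal.coe_one]

lemma integral_sum_sq_pi {ι : Type*} [Fintype ι] {μ : ι → Measure ℝ}
    [∀ i, IsProbabilityMeasure (μ i)] (h : ∀ i, Integrable (fun y => y ^ 2) (μ i)) :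
    ∫ x, ∑ i, x i ^ 2 ∂Measure.pi μ = ∑ i, ∫ y, y ^ 2 ∂μ i := by
  rw [integral_finsetSum _ fun i _ => integrable_comp_eval (f := fun y => y ^ 2) (h i)]
  exact Finset.sum_congr rfl fun i _ =>
    integral_comp_eval (f := fun y => y ^ 2) (h i).aestronglyMeasurable

section XiLaw

variable {n lam : ℕ}

instance (i : Fin n) :
    IsProbabilityMeasure (if (i : ℕ) = 0 then minLaw lam else gaussianReal 0 1) := by
  split <;> infer_instance

instance : IsProbabilityMeasure (xiLaw n lam) := by
  unfold xiLaw
  infer_instance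

lemma integrable_sq_xiLaw_coord (hlam : lam = 1 ∨ lam = 2) (i : Fin n) :
    Integrable (fun y => y ^ 2) (if (i : ℕ) = 0 then minLaw lam else gaussianReal 0 1) := by
  split
  · exact (memLp_id_minLaw hlam).integrable_sq
  · exact (memLp_id_gaussianReal 2).integrable_sq

lemma integral_sq_xiLaw_coord (hlam : lam = 1 ∨ lam = 2) (i : Fin n) :
    ∫ y, y ^ 2 ∂(if (i : ℕ) = 0 then minLaw lam else gaussianReal 0 1) = 1 := by
  split
  · exact integral_sq_minLaw hlam
  · rw [integral_sq_gaussianReal_zero, NNReal.coe_one]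

lemma integrable_sum_sq_xiLaw (hlam : lam = 1 ∨ lam = 2) :
    Integrable (fun x : Fin n → ℝ => ∑ i, x i ^ 2) (xiLaw n lam) :=
  integrable_finsetSum _ fun i _ =>
    integrable_comp_eval (f := fun y => y ^ 2) (integrable_sq_xiLaw_coord hlam i)

lemma integral_sum_sq_xiLaw (hlam : lam = 1 ∨ lam = 2) :
    ∫ x, ∑ i, x i ^ 2 ∂xiLaw n lam = n := by
  rw [xiLaw, integral_sum_sq_pi (integrable_sq_xiLaw_coord hlam)]
  simp [integral_sq_xiLaw_coord hlam]

end XiLaw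

noncomputable def logStepSizeIncrement (n : ℕ) (d : ℝ) (x : Fin n → ℝ) : ℝ :=
  (1 / (2 * d)) * ((∑ i, x i ^ 2) / n - 1)

lemma measurable_logStepSizeIncrement (n : ℕ) (d : ℝ) :
    Measurable (logStepSizeIncrement n d) := by
  unfold logStepSizeIncrement
  fun_prop

lemma integral_logStepSizeIncrement_xiLaw {n lam : ℕ} (hn : 1 ≤ n) (hlam : lam = 1 ∨ lam = 2)
    (d : ℝ) : ∫ x, logStepSizeIncrement n d x ∂xiLaw n lam = 0 := by
  have hn0 : (n : ℝ) ≠ 0 := by positivity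
  simp only [logStepSizeIncrement]
  rw [integral_const_mul, integral_sub ((integrable_sum_sq_xiLaw hlam).div_const _)
    (integrable_const 1), integral_div, integral_sum_sq_xiLaw hlam, div_self hn0]
  simp

theorem stmt_8_general {n lam : ℕ} (hn : 1 ≤ n) (hlam : lam = 1 ∨ lam = 2)
    {Ω : Type*} [MeasureSpace Ω] [IsProbabilityMeasure (ℙ : Measure Ω)]
    (d : ℝ)
    (ξ : ℕ → Ω → (Fin n → ℝ))
    (hξindep : iIndepFun ξ ℙ)
    (hξlaw : ∀ t, Measure.map (ξ t) ℙ = xiLaw n lam)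
    (W : ℕ → Ω → ℝ)
    (hW : ∀ t ω, W t ω = (1 / (2 * d)) * ((∑ i, (ξ t ω i) ^ 2) / n - 1)) :
    iIndepFun W ℙ ∧
    (∀ s t : ℕ, IdentDistrib (W s) (W t) ℙ ℙ) ∧
    (∀ t : ℕ, (∫ ω, W t ω ∂ℙ) = 0) := by
  have hlaw (t : ℕ) : HasLaw (ξ t) (xiLaw n lam) ℙ :=
    ⟨aemeasurable_of_map_neZero (by rw [hξlaw t]; infer_instance), hξlaw t⟩
  obtain rfl : W = fun t => logStepSizeIncrement n d ∘ ξ t := funext fun t => funext (hW t)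
  have hmeas := measurable_logStepSizeIncrement n d
  refine ⟨hξindep.comp _ fun _ => hmeas, fun s t => ?_, fun t => ?_⟩
  · exact IdentDistrib.comp ⟨(hlaw s).aemeasurable, (hlaw t).aemeasurable,
      by rw [hξlaw s, hξlaw t]⟩ hmeas
  · rw [(hlaw t).integral_comp hmeas.aestronglyMeasurable]
    exact integral_logStepSizeIncrement_xiLaw hn hlam d

/-- For `λ ∈ {1, 2}`, without cumulation, `ln σ_t` performs an
additive unbiased random walk: the increments `W_t = (1/(2 d_σ))(‖ξ_t‖²/n − 1)`
(so that `ln σ_{t+1} = ln σ_t + W_t`) are i.i.d. with `E(W_t) = 0`. -/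
theorem stmt_8 {n lam : ℕ} (hn : 1 ≤ n) (hlam : lam = 1 ∨ lam = 2)
    {Ω : Type*} [MeasureSpace Ω] [IsProbabilityMeasure (ℙ : Measure Ω)]
    (d σ0 : ℝ) (hd : 0 < d) (hσ0 : 0 < σ0)
    (ξ : ℕ → Ω → (Fin n → ℝ)) (hξmeas : ∀ t, Measurable (ξ t))
    (hξindep : iIndepFun ξ ℙ)
    (hξlaw : ∀ t, Measure.map (ξ t) ℙ = xiLaw n lam)
    (W : ℕ → Ω → ℝ)
    (hW : ∀ t ω, W t ω = (1 / (2 * d)) * ((∑ i, (ξ t ω i) ^ 2) / n - 1))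
    (σ : ℕ → Ω → ℝ) (h0 : ∀ ω, σ 0 ω = σ0)
    (hrec : ∀ t ω, Real.log (σ (t + 1) ω) = Real.log (σ t ω) + W t ω) :
    iIndepFun W ℙ ∧
    (∀ s t : ℕ, IdentDistrib (W s) (W t) ℙ ℙ) ∧
    (∀ t : ℕ, (∫ ω, W t ω ∂ℙ) = 0) :=
  stmt_8_general hn hlam d ξ hξindep hξlaw W hW
end

section
/- Let n ≥ 1, λ ≥ 1, 0 < c ≤ 1. Let p_0 be a standard Gaussian random vector in ℝⁿ and let (ξ_t)_{t∈ℕ} be i.i.d. ℝⁿ-valued random vectors, independent of p_0, each distributed as the vector (N_{1:λ}, N_2, …, N_n) with independent coordinates, first coordinate distributed as the minimum of λ i.i.d. standard normals and the other n−1 coordinates standard normal. Define the cumulative path by p_{t+1} = (1−c) p_t + √(c(2−c)) ξ_t. Then lim_{t→∞} E([p_t]_1²) = 2((1−c)/c) · E(N_{1:λ})² + E(N_{1:λ}²). -/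
open MeasureTheory ProbabilityTheory Filter Real

/-!
The first coordinate `x_t = [p_t]₁` is an autoregressive process
`x_{t+1} = (1 - c) x_t + b y_{t+1}` with `b = √(c(2-c))`, and `x_t` is measurable with respect to
the innovations `y_0, …, y_t`, hence independent of `y_{t+1}`. So the mean and the variance of
`x_t` obey contracting affine recurrences and converge to `b m / c` and
`b² σ² / (1 - (1-c)²) = σ²`, where `m` and `σ²` are the mean and variance of `N_{1:λ}`
(finite because `|min_i x_i| ≤ ∑_i |x_i|`). Hence
`E x_t² → σ² + (2 - c) m² / c = 2 ((1-c)/c) m² + E N_{1:λ}²`.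
-/

open scoped Topology ENNReal

lemma abs_iInf_le_sum_abs {ι : Type*} [Fintype ι] (x : ι → ℝ) : |⨅ i, x i| ≤ ∑ i, |x i| := by
  rcases isEmpty_or_nonempty ι with _ | _
  · simp [Real.iInf_of_isEmpty]
  · obtain ⟨j, hj⟩ := Finite.exists_min x
    rw [le_antisymm (ciInf_le (Finite.bddBelow_range x) j) (le_ciInf hj)]
    exact Finset.single_le_sum (fun i _ => abs_nonneg (x i)) (Finset.mem_univ j)

lemma memLp_two_minLaw (lam : ℕ) : MemLp id 2 (minLaw lam) := by
  have hmin : Measurable fun x : Fin lam → ℝ => ⨅ i, x i := .iInf fun i => measurable_pi_apply i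
  have hsum : MemLp (fun x : Fin lam → ℝ => ∑ i, |x i|) 2
      (Measure.pi fun _ => gaussianReal 0 1) :=
    memLp_finsetSum _ fun i _ =>
      ((memLp_id_gaussianReal 2).comp_measurePreserving (measurePreserving_eval _ i)).abs
  rw [minLaw, memLp_map_measure_iff aestronglyMeasurable_id hmin.aemeasurable]
  refine hsum.of_le hmin.aestronglyMeasurable (ae_of_all _ fun x => ?_)
  simpa [abs_of_nonneg (Finset.sum_nonneg fun i _ => abs_nonneg (x i))] using abs_iInf_le_sum_abs x

lemma tendsto_of_affine_recurrence {r d : ℝ} (hr : |r| < 1) {u : ℕ → ℝ}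
    (hu : ∀ t, u (t + 1) = r * u t + d) : Tendsto u atTop (𝓝 (d / (1 - r))) := by
  have hr1 : 1 - r ≠ 0 := by linarith [le_abs_self r]
  have hclosed : ∀ t, r ^ t * (u 0 - d / (1 - r)) + d / (1 - r) = u t := by
    intro t
    induction t with
    | zero => simp
    | succ t ih => rw [hu, ← ih]; field_simp; ring
  have hlim := ((tendsto_pow_atTop_nhds_zero_of_abs_lt_one hr).mul_const
    (u 0 - d / (1 - r))).add_const (d / (1 - r))
  rw [zero_mul, zero_add] at hlim
  exact hlim.congr hclosed

lemma ProbabilityTheory.IndepFun.variance_const_mul_add_const_mul {Ω : Type*}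
    [MeasurableSpace Ω] {μ : Measure Ω} {X Y : Ω → ℝ} (hX : MemLp X 2 μ) (hY : MemLp Y 2 μ) (hXY : IndepFun X Y μ) (a b : ℝ) :
    Var[fun ω => a * X ω + b * Y ω; μ] = a ^ 2 * Var[X; μ] + b ^ 2 * Var[Y; μ] := by
  rw [← variance_const_mul, ← variance_const_mul]
  exact IndepFun.variance_add (hX.const_mul a) (hY.const_mul b)
    (hXY.comp (measurable_const_mul a) (measurable_const_mul b))

section AutoregressiveProcess

variable {Ω : Type*} {a b : ℝ} {X Y : ℕ → Ω → ℝ}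

abbrev innovationsUpTo (Y : ℕ → Ω → ℝ) (t : ℕ) : MeasurableSpace Ω :=
  ⨆ k ∈ Set.Iic t, MeasurableSpace.comap (Y k) inferInstance

lemma measurable_innovationsUpTo {k t : ℕ} (hkt : k ≤ t) :
    Measurable[innovationsUpTo Y t] (Y k) :=
  (comap_measurable (Y k)).mono
    (le_iSup₂ (f := fun k (_ : k ∈ Set.Iic t) => MeasurableSpace.comap (Y k) inferInstance) k hkt)
    le_rfl

lemma measurable_innovationsUpTo_of_recurrence (h0 : X 0 = Y 0)
    (hrec : ∀ t ω, X (t + 1) ω = a * X t ω + b * Y (t + 1) ω) (t : ℕ) :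
    Measurable[innovationsUpTo Y t] (X t) := by
  induction t with
  | zero => exact h0 ▸ measurable_innovationsUpTo le_rfl
  | succ t ih =>
    have hmono : innovationsUpTo Y t ≤ innovationsUpTo Y (t + 1) :=
      biSup_mono fun k hk => Set.mem_Iic.2 (Nat.le_succ_of_le hk)
    rw [funext (hrec t)]
    exact ((ih.mono hmono le_rfl).const_mul a).add
      ((measurable_innovationsUpTo le_rfl).const_mul b)

variable [MeasurableSpace Ω] {μ : Measure Ω}

lemma indepFun_of_recurrence (hY : iIndepFun Y μ) (hYm : ∀ k, Measurable (Y k))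
    (h0 : X 0 = Y 0) (hrec : ∀ t ω, X (t + 1) ω = a * X t ω + b * Y (t + 1) ω) (t : ℕ) :
    IndepFun (X t) (Y (t + 1)) μ := by
  have hind := indep_iSup_of_disjoint (fun k => (hYm k).comap_le) hY.iIndep
    (S := Set.Iic t) (T := {t + 1}) (Set.disjoint_singleton_right.2 (by simp))
  rw [iSup_singleton] at hind
  rw [IndepFun_iff_Indep]
  exact indep_of_indep_of_le_left hind (measurable_innovationsUpTo_of_recurrence h0 hrec t).comap_le

lemma memLp_of_recurrence {p : ℝ≥0∞} (hY : ∀ k, MemLp (Y k) p μ) (h0 : X 0 = Y 0)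
    (hrec : ∀ t ω, X (t + 1) ω = a * X t ω + b * Y (t + 1) ω) (t : ℕ) : MemLp (X t) p μ := by
  induction t with
  | zero => exact h0 ▸ hY 0
  | succ t ih =>
    rw [funext (hrec t)]
    exact (ih.const_mul a).add ((hY _).const_mul b)

theorem tendsto_integral_sq_of_recurrence [IsProbabilityMeasure μ] (ha : |a| < 1)
    {ν : Measure ℝ} (hν : MemLp id 2 ν) (hYm : ∀ k, Measurable (Y k)) (hY : iIndepFun Y μ)
    (hY0 : MemLp (Y 0) 2 μ) (hYlaw : ∀ k, HasLaw (Y (k + 1)) ν μ) (h0 : X 0 = Y 0)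
    (hrec : ∀ t ω, X (t + 1) ω = a * X t ω + b * Y (t + 1) ω) :
    Tendsto (fun t => ∫ ω, X t ω ^ 2 ∂μ) atTop
      (𝓝 (b ^ 2 * Var[id; ν] / (1 - a ^ 2) + (b * (∫ x, x ∂ν) / (1 - a)) ^ 2)) := by
  have hYL2 : ∀ k, MemLp (Y k) 2 μ := by
    rintro (_ | k)
    · exact hY0
    · exact hν.comp_measurePreserving ((hYlaw k).measurePreserving (hYm _))
  have hXL2 := memLp_of_recurrence hYL2 h0 hrec
  have hmean : Tendsto (fun t => μ[X t]) atTop (𝓝 (b * (∫ x, x ∂ν) / (1 - a))) := by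
    refine tendsto_of_affine_recurrence ha fun t => ?_
    rw [funext (hrec t), integral_add (((hXL2 t).integrable one_le_two).const_mul a)
      (((hYL2 _).integrable one_le_two).const_mul b), integral_const_mul, integral_const_mul,
      (hYlaw t).integral_eq]
  have hvar : Tendsto (fun t => Var[X t; μ]) atTop (𝓝 (b ^ 2 * Var[id; ν] / (1 - a ^ 2))) := by
    have ha2 : |a ^ 2| < 1 := by rwa [abs_pow, sq_lt_one_iff₀ (abs_nonneg a)]
    refine tendsto_of_affine_recurrence ha2 fun t => ?_
    rw [funext (hrec t),
      (indepFun_of_recurrence hY hYm h0 hrec t).variance_const_mul_add_const_mul (hXL2 t) (hYL2 _),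
      (hYlaw t).variance_eq]
  refine (hvar.add (hmean.pow 2)).congr fun t => ?_
  rw [variance_eq_sub (hXL2 t)]
  simp

end AutoregressiveProcess

theorem stmt_11_general {n lam : ℕ} (hn : 1 ≤ n)
    (c : ℝ) (hc0 : 0 < c) (hc1 : c ≤ 1)
    {Ω : Type*} [MeasureSpace Ω] [IsProbabilityMeasure (ℙ : Measure Ω)]
    (Z : ℕ → Ω → (Fin n → ℝ)) (hZmeas : ∀ t, Measurable (Z t))
    (hZindep : iIndepFun Z ℙ)
    (hZ0 : Measure.map (Z 0) ℙ = Measure.pi fun _ : Fin n => gaussianReal 0 1)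
    (hZlaw : ∀ t, Measure.map (Z (t + 1)) ℙ = xiLaw n lam)
    (p : ℕ → Ω → (Fin n → ℝ)) (hp0 : p 0 = Z 0)
    (hprec : ∀ t ω i, p (t + 1) ω i =
      (1 - c) * p t ω i + Real.sqrt (c * (2 - c)) * Z (t + 1) ω i)
    :
    Tendsto (fun t : ℕ => ∫ ω, (p t ω ⟨0, hn⟩) ^ 2 ∂ℙ) atTop
      (nhds (2 * ((1 - c) / c) * (∫ x, x ∂(minLaw lam)) ^ 2 +
        ∫ x, x ^ 2 ∂(minLaw lam))) := by
  set i₀ : Fin n := ⟨0, hn⟩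
  have : ∀ i : Fin n, IsProbabilityMeasure
      (if (i : ℕ) = 0 then minLaw lam else gaussianReal 0 1) := fun i => by
    split_ifs <;> infer_instance
  have hYlaw (k : ℕ) : HasLaw (fun ω => Z (k + 1) ω i₀) (minLaw lam) ℙ := by
    simpa [i₀] using (measurePreserving_eval _ i₀).fun_comp_hasLaw
      (⟨(hZmeas _).aemeasurable, hZlaw k⟩ : HasLaw (Z (k + 1)) (xiLaw n lam) ℙ)
  have hY0 : MemLp (fun ω => Z 0 ω i₀) 2 ℙ :=
    ((memLp_id_gaussianReal 2).comp_measurePreserving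
      (measurePreserving_eval (fun _ : Fin n => gaussianReal 0 1) i₀)).comp_measurePreserving
      ⟨hZmeas 0, hZ0⟩
  have hlim := tendsto_integral_sq_of_recurrence (X := fun t ω => p t ω i₀)
    (Y := fun k ω => Z k ω i₀) (a := 1 - c) (b := √(c * (2 - c)))
    (abs_lt.2 ⟨by linarith, by linarith⟩) (memLp_two_minLaw lam)
    (fun k => (measurable_pi_apply i₀).comp (hZmeas k))
    (hZindep.comp _ fun _ => measurable_pi_apply i₀) hY0 hYlaw
    (by rw [hp0]) (fun t ω => hprec t ω i₀)
  convert hlim using 2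
  have hb : √(c * (2 - c)) ^ 2 = c * (2 - c) := Real.sq_sqrt (by nlinarith)
  have h2c : 2 - c ≠ 0 := by linarith
  rw [variance_eq_sub (memLp_two_minLaw lam), div_pow, mul_pow, hb, sub_sub_cancel,
    show 1 - (1 - c) ^ 2 = c * (2 - c) by ring]
  simp only [id, Pi.pow_apply]
  field_simp
  ring

/-- For the cumulative path `p_{t+1} = (1−c) p_t + √(c(2−c)) ξ_t`
of the `(1,λ)`-CSA-ES (with `p₀` standard Gaussian, independent of the i.i.d.
selected steps `ξ_t = Z_{t+1}`),
`lim_t E([p_t]₁²) = 2((1−c)/c) E(N_{1:λ})² + E(N_{1:λ}²)`. -/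
theorem stmt_11 {n lam : ℕ} (hn : 1 ≤ n) (hlam : 1 ≤ lam)
    (c : ℝ) (hc0 : 0 < c) (hc1 : c ≤ 1)
    {Ω : Type*} [MeasureSpace Ω] [IsProbabilityMeasure (ℙ : Measure Ω)]
    (Z : ℕ → Ω → (Fin n → ℝ)) (hZmeas : ∀ t, Measurable (Z t))
    (hZindep : iIndepFun Z ℙ)
    (hZ0 : Measure.map (Z 0) ℙ = Measure.pi fun _ : Fin n => gaussianReal 0 1)
    (hZlaw : ∀ t, Measure.map (Z (t + 1)) ℙ = xiLaw n lam)
    (p : ℕ → Ω → (Fin n → ℝ)) (hp0 : p 0 = Z 0)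
    (hprec : ∀ t ω i, p (t + 1) ω i =
      (1 - c) * p t ω i + Real.sqrt (c * (2 - c)) * Z (t + 1) ω i)
    :
    Tendsto (fun t : ℕ => ∫ ω, (p t ω ⟨0, hn⟩) ^ 2 ∂ℙ) atTop
      (nhds (2 * ((1 - c) / c) * (∫ x, x ∂(minLaw lam)) ^ 2 +
        ∫ x, x ^ 2 ∂(minLaw lam))) :=
  stmt_11_general hn c hc0 hc1 Z hZmeas hZindep hZ0 hZlaw p hp0 hprec
end

section
/- Let λ ≥ 2 and 0 < c < 1, or λ ≥ 3 and 0 < c ≤ 1. Then 2(1−c) E(N_{1:λ})² + c (E(N_{1:λ}²) − 1) > 0, where N_{1:λ} is the minimum of λ i.i.d. standard normal random variables. Consequently the divergence rate (1/(2 d_σ n)) (2(1−c) E(N_{1:λ})² + c (E(N_{1:λ}²) − 1)) of the step-size of the (1,λ)-CSA-ES is strictly positive for any d_σ > 0 and n ≥ 1. -/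
open MeasureTheory ProbabilityTheory Filter Real

/-!
Write `φ` for the standard normal density and `Q x = P(N > x)` for its tail. Since
`P(N_{1:λ} > x) = Q x ^ λ`, the minimum has density `λ φ Q^(λ-1)`, whose derivative is
`-x λ φ Q^(λ-1) - λ(λ-1) φ² Q^(λ-2)`. Integrating this derivative against `1` and `x` gives
`E N_{1:λ} = -λ(λ-1) ∫ φ² Q^(λ-2) < 0` and `E N_{1:λ}² = 1 - λ(λ-1) ∫ x φ² Q^(λ-2)`.
Pairing `x` with `-x`, the last integral is half of `∫ φ(x)² x (Q(x)^(λ-2) - Q(-x)^(λ-2))`,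
whose integrand is `≤ 0` because `Q` decreases, and `< 0` for `x ≠ 0` once `λ ≥ 3`. Hence
`E N_{1:λ}² ≥ 1`, strictly for `λ ≥ 3`, which together with `E N_{1:λ} ≠ 0` gives the claim.
-/

open Set

lemma lt_iInf_iff_of_finite_s15 {ι α : Type*} [ConditionallyCompleteLinearOrder α] [Finite ι]
    [Nonempty ι] {f : ι → α} {t : α} :
    t < ⨅ i, f i ↔ ∀ i, t < f i := by
  obtain ⟨j, hj⟩ := exists_eq_ciInf_of_finite (f := f)
  rw [← hj]
  exact ⟨fun h i => h.trans_le (hj ▸ ciInf_le (Finite.bddBelow_range f) i), fun h => h j⟩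

lemma integral_add_comp_neg {G E : Type*} [MeasurableSpace G] [AddGroup G] [MeasurableNeg G]
    [NormedAddCommGroup E] [NormedSpace ℝ E] {μ : Measure G} [μ.IsNegInvariant] {f : G → E}
    (hf : Integrable f μ) :
    ∫ x, (f x + f (-x)) ∂μ = (2 : ℝ) • ∫ x, f x ∂μ := by
  rw [integral_add hf hf.comp_neg, integral_neg_eq_self, two_smul]

section OrderedRing

variable {α : Type*} [Ring α] [LinearOrder α] [IsStrictOrderedRing α] {f : α → α}

lemma Antitone.mul_sub_comp_neg_nonpos (hf : Antitone f) (x : α) :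
    x * (f x - f (-x)) ≤ 0 := by
  rcases le_total 0 x with hx | hx
  · exact mul_nonpos_of_nonneg_of_nonpos hx (sub_nonpos.2 (hf (neg_le_self hx)))
  · exact mul_nonpos_of_nonpos_of_nonneg hx (sub_nonneg.2 (hf (Right.self_le_neg hx)))

lemma StrictAnti.mul_sub_comp_neg_neg (hf : StrictAnti f) {x : α} (hx : x ≠ 0) :
    x * (f x - f (-x)) < 0 := by
  rcases hx.lt_or_gt with hx | hx
  · exact mul_neg_of_neg_of_pos hx (sub_pos.2 (hf (Right.self_lt_neg hx)))
  · exact mul_neg_of_pos_of_neg hx (sub_neg.2 (hf (neg_lt_self hx)))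

end OrderedRing

section

local notation "φ" => gaussianPDFReal 0 1

lemma gaussianPDFReal_zero_one_apply (x : ℝ) : φ x = (√(2 * π))⁻¹ * exp (-x ^ 2 / 2) := by
  simp [gaussianPDFReal]

lemma gaussianPDFReal_zero_one_neg (x : ℝ) : φ (-x) = φ x := by
  simp [gaussianPDFReal_zero_one_apply]

lemma gaussianPDFReal_zero_one_le_one (x : ℝ) : φ x ≤ 1 := by
  rw [gaussianPDFReal_zero_one_apply]
  have h2π : 1 ≤ √(2 * π) := Real.one_le_sqrt.mpr (by linarith [Real.pi_gt_three])
  exact mul_le_one₀ (inv_le_one_of_one_le₀ h2π) (exp_nonneg _)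
    (exp_le_one_iff.mpr (by nlinarith [sq_nonneg x]))

lemma hasDerivAt_gaussianPDFReal_zero_one (x : ℝ) : HasDerivAt φ (-x * φ x) x := by
  have h : HasDerivAt (fun x : ℝ => -x ^ 2 / 2) (-x) x := by
    refine ((hasDerivAt_pow 2 x).neg.div_const 2).congr_deriv ?_
    ring
  rw [show φ = fun x => (√(2 * π))⁻¹ * exp (-x ^ 2 / 2) from
    funext gaussianPDFReal_zero_one_apply]
  refine (h.exp.const_mul _).congr_deriv ?_
  ring

@[fun_prop]
lemma continuous_gaussianPDFReal_zero_one : Continuous φ :=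
  continuous_iff_continuousAt.2 fun x => (hasDerivAt_gaussianPDFReal_zero_one x).continuousAt

lemma integrable_pow_mul_gaussianPDFReal_zero_one (k : ℕ) :
    Integrable fun x => x ^ k * φ x := by
  have h := (integrable_rpow_mul_exp_neg_mul_sq (b := 1 / 2) (by norm_num)
    (s := k) (by linarith [k.cast_nonneg (α := ℝ)])).const_mul (√(2 * π))⁻¹
  refine h.congr (ae_of_all _ fun x => ?_)
  simp only [rpow_natCast, gaussianPDFReal_zero_one_apply]
  rw [show -(1 / 2) * x ^ 2 = -x ^ 2 / 2 by ring]
  ring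

lemma integrable_pow_mul_gaussianPDFReal_zero_one_mul {g : ℝ → ℝ} {C : ℝ} (k : ℕ)
    (hg : Continuous g) (hgC : ∀ x, |g x| ≤ C) :
    Integrable fun x => x ^ k * φ x * g x :=
  (integrable_pow_mul_gaussianPDFReal_zero_one k).mul_bdd hg.aestronglyMeasurable
    (ae_of_all _ hgC)

noncomputable def gaussianTail (x : ℝ) : ℝ := 1 - cdf (gaussianReal 0 1) x

lemma gaussianTail_nonneg (x : ℝ) : 0 ≤ gaussianTail x := sub_nonneg.mpr (cdf_le_one _ x)

lemma gaussianTail_le_one (x : ℝ) : gaussianTail x ≤ 1 := sub_le_self _ (cdf_nonneg _ x)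

lemma gaussianReal_zero_one_Ioi (x : ℝ) :
    gaussianReal 0 1 (Ioi x) = ENNReal.ofReal (gaussianTail x) := by
  rw [← compl_Iic, prob_compl_eq_one_sub measurableSet_Iic, gaussianTail, cdf_eq_real,
    measureReal_def, ENNReal.ofReal_sub _ ENNReal.toReal_nonneg, ENNReal.ofReal_one,
    ENNReal.ofReal_toReal (measure_ne_top _ _)]

lemma cdf_gaussianReal_zero_one (x : ℝ) : cdf (gaussianReal 0 1) x = ∫ y in Iic x, φ y := by
  rw [cdf_eq_real, measureReal_def, gaussianReal_apply_eq_integral 0 one_ne_zero,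
    ENNReal.toReal_ofReal
      (setIntegral_nonneg measurableSet_Iic fun y _ => gaussianPDFReal_nonneg 0 1 y)]

lemma hasDerivAt_gaussianTail (x : ℝ) : HasDerivAt gaussianTail (-φ x) x := by
  have hφ (a : ℝ) : IntegrableOn φ (Iic a) := (integrable_gaussianPDFReal 0 1).integrableOn
  have h : gaussianTail = fun u => 1 - ((∫ y in Iic 0, φ y) + ∫ y in 0..u, φ y) := by
    funext u
    rw [gaussianTail, cdf_gaussianReal_zero_one,
      ← intervalIntegral.integral_Iic_sub_Iic (hφ 0) (hφ u)]
    ring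
  rw [h]
  simpa using (((continuous_gaussianPDFReal_zero_one.integral_hasStrictDerivAt 0 x).hasDerivAt
    ).const_add _).const_sub 1

@[fun_prop]
lemma continuous_gaussianTail : Continuous gaussianTail :=
  continuous_iff_continuousAt.2 fun x => (hasDerivAt_gaussianTail x).continuousAt

lemma gaussianTail_strictAnti : StrictAnti gaussianTail :=
  strictAnti_of_hasDerivAt_neg hasDerivAt_gaussianTail fun x =>
    neg_neg_of_pos (gaussianPDFReal_pos 0 1 x one_ne_zero)

lemma gaussianTail_pos (x : ℝ) : 0 < gaussianTail x :=
  (gaussianTail_nonneg (x + 1)).trans_lt (gaussianTail_strictAnti (lt_add_one x))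

lemma tendsto_gaussianTail_atBot : Tendsto gaussianTail atBot (nhds 1) := by
  show Tendsto (fun x => 1 - cdf (gaussianReal 0 1) x) atBot (nhds 1)
  simpa using (tendsto_cdf_atBot (gaussianReal 0 1)).const_sub 1

lemma antitone_gaussianTail_pow (e : ℕ) : Antitone fun x => gaussianTail x ^ e :=
  fun _ b hab => pow_le_pow_left₀ (gaussianTail_nonneg b) (gaussianTail_strictAnti.antitone hab) e

lemma strictAnti_gaussianTail_pow {e : ℕ} (he : e ≠ 0) :
    StrictAnti fun x => gaussianTail x ^ e :=
  fun _ b hab => pow_lt_pow_left₀ (gaussianTail_strictAnti hab) (gaussianTail_nonneg b) he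

noncomputable def minDensity (lam : ℕ) (x : ℝ) : ℝ :=
  lam * φ x * gaussianTail x ^ (lam - 1)

lemma minDensity_nonneg (lam : ℕ) (x : ℝ) : 0 ≤ minDensity lam x :=
  mul_nonneg (mul_nonneg lam.cast_nonneg (gaussianPDFReal_nonneg 0 1 x))
    (pow_nonneg (gaussianTail_nonneg x) _)

lemma continuous_minDensity (lam : ℕ) : Continuous (minDensity lam) :=
  (continuous_const.mul continuous_gaussianPDFReal_zero_one).mul (continuous_gaussianTail.pow _)

lemma integrable_pow_mul_minDensity (lam k : ℕ) :
    Integrable fun x => x ^ k * minDensity lam x := by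
  have hbound (x : ℝ) : |lam * gaussianTail x ^ (lam - 1)| ≤ lam := by
    rw [abs_of_nonneg (by positivity [gaussianTail_nonneg x])]
    exact mul_le_of_le_one_right lam.cast_nonneg
      (pow_le_one₀ (gaussianTail_nonneg x) (gaussianTail_le_one x))
  refine (integrable_pow_mul_gaussianPDFReal_zero_one_mul
    (g := fun x => lam * gaussianTail x ^ (lam - 1)) k (by fun_prop) hbound).congr
    (ae_of_all _ fun x => ?_)
  simp only [minDensity]
  ring

lemma hasDerivAt_neg_gaussianTail_pow (n : ℕ) (x : ℝ) :
    HasDerivAt (fun y => -gaussianTail y ^ n) (minDensity n x) x := by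
  refine ((hasDerivAt_gaussianTail x).pow n).neg.congr_deriv ?_
  simp only [minDensity]
  ring

lemma minLaw_Iic {lam : ℕ} (hlam : lam ≠ 0) (t : ℝ) :
    minLaw lam (Iic t) = ENNReal.ofReal (1 - gaussianTail t ^ lam) := by
  have : Nonempty (Fin lam) := Fin.pos_iff_nonempty.mp (Nat.pos_of_ne_zero hlam)
  have hmin : Measurable fun x : Fin lam → ℝ => ⨅ i, x i :=
    Measurable.iInf fun i => measurable_pi_apply i
  have hpre : (fun x : Fin lam → ℝ => ⨅ i, x i) ⁻¹' Ioi t = univ.pi fun _ => Ioi t := by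
    ext x
    simp [lt_iInf_iff_of_finite_s15]
  rw [minLaw, Measure.map_apply hmin measurableSet_Iic, ← compl_Ioi, preimage_compl, hpre,
    prob_compl_eq_one_sub (MeasurableSet.univ_pi fun _ => measurableSet_Ioi), Measure.pi_pi]
  simp only [gaussianReal_zero_one_Ioi, Finset.prod_const, Finset.card_univ, Fintype.card_fin]
  rw [← ENNReal.ofReal_pow (gaussianTail_nonneg t), ← ENNReal.ofReal_one,
    ← ENNReal.ofReal_sub _ (pow_nonneg (gaussianTail_nonneg t) _)]

lemma minLaw_eq_withDensity {lam : ℕ} (hlam : lam ≠ 0) :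
    minLaw lam = volume.withDensity fun x => ENNReal.ofReal (minDensity lam x) := by
  refine Measure.ext_of_Iic _ _ fun t => ?_
  have hint := (integrable_pow_mul_minDensity lam 0).integrableOn (s := Iic t)
  simp only [pow_zero, one_mul] at hint
  rw [minLaw_Iic hlam, withDensity_apply _ measurableSet_Iic,
    ← ofReal_integral_eq_lintegral_ofReal hint (ae_of_all _ fun x => minDensity_nonneg lam x),
    integral_Iic_of_hasDerivAt_of_tendsto' (fun x _ => hasDerivAt_neg_gaussianTail_pow lam x)
      hint (tendsto_gaussianTail_atBot.pow lam).neg]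
  congr 1
  ring

lemma integral_minLaw {lam : ℕ} (hlam : lam ≠ 0) (g : ℝ → ℝ) :
    ∫ x, g x ∂minLaw lam = ∫ x, g x * minDensity lam x := by
  rw [minLaw_eq_withDensity hlam, integral_withDensity_eq_integral_toReal_smul
    (continuous_minDensity lam).measurable.ennreal_ofReal
    (ae_of_all _ fun _ => ENNReal.ofReal_lt_top)]
  simp only [ENNReal.toReal_ofReal (minDensity_nonneg lam _), smul_eq_mul, mul_comm]

lemma integral_minDensity {lam : ℕ} (hlam : lam ≠ 0) : ∫ x, minDensity lam x = 1 := by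
  simpa using (integral_minLaw hlam fun _ => 1).symm

noncomputable def tailWeight (e : ℕ) (x : ℝ) : ℝ := φ x ^ 2 * gaussianTail x ^ e

lemma tailWeight_pos (e : ℕ) (x : ℝ) : 0 < tailWeight e x :=
  mul_pos (pow_pos (gaussianPDFReal_pos 0 1 x one_ne_zero) 2) (pow_pos (gaussianTail_pos x) e)

@[fun_prop]
lemma continuous_tailWeight (e : ℕ) : Continuous (tailWeight e) := by
  unfold tailWeight
  fun_prop

lemma integrable_pow_mul_tailWeight (k e : ℕ) :
    Integrable fun x => x ^ k * tailWeight e x := by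
  have hbound (x : ℝ) : |φ x * gaussianTail x ^ e| ≤ 1 := by
    rw [abs_of_nonneg (mul_nonneg (gaussianPDFReal_nonneg 0 1 x)
      (pow_nonneg (gaussianTail_nonneg x) e))]
    exact mul_le_one₀ (gaussianPDFReal_zero_one_le_one x) (pow_nonneg (gaussianTail_nonneg x) e)
      (pow_le_one₀ (gaussianTail_nonneg x) (gaussianTail_le_one x))
  refine (integrable_pow_mul_gaussianPDFReal_zero_one_mul
    (g := fun x => φ x * gaussianTail x ^ e) k (by fun_prop) hbound).congr
    (ae_of_all _ fun x => ?_)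
  simp only [tailWeight]
  ring

lemma hasDerivAt_minDensity (e : ℕ) (x : ℝ) :
    HasDerivAt (minDensity (e + 2))
      (-(x * minDensity (e + 2) x) - ((e : ℝ) + 2) * (e + 1) * tailWeight e x) x := by
  have hdens : minDensity (e + 2) = fun y => ((e : ℝ) + 2) * φ y * gaussianTail y ^ (e + 1) := by
    funext y
    simp [minDensity]
  rw [hdens]
  refine (((hasDerivAt_gaussianPDFReal_zero_one x).const_mul ((e : ℝ) + 2)).mul
    ((hasDerivAt_gaussianTail x).pow (e + 1))).congr_deriv ?_
  simp only [tailWeight, Pi.pow_apply]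
  push_cast
  ring

lemma integral_id_minLaw (e : ℕ) :
    ∫ x, x ∂minLaw (e + 2) = -(((e : ℝ) + 2) * (e + 1)) * ∫ x, tailWeight e x := by
  have hd := integrable_pow_mul_minDensity (e + 2) 0
  have hxd := integrable_pow_mul_minDensity (e + 2) 1
  have hw := integrable_pow_mul_tailWeight 0 e
  simp only [pow_zero, pow_one, one_mul] at hd hxd hw
  have h := integral_eq_zero_of_hasDerivAt_of_integrable (hasDerivAt_minDensity e)
    (hxd.neg.sub (hw.const_mul _)) hd
  rw [integral_sub hxd.fun_neg (hw.const_mul _), integral_neg, integral_const_mul] at h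
  rw [integral_minLaw (by omega) fun x => x]
  linarith

lemma integral_sq_minLaw_s15 (e : ℕ) :
    ∫ x, x ^ 2 ∂minLaw (e + 2) = 1 - ((e : ℝ) + 2) * (e + 1) * ∫ x, x * tailWeight e x := by
  have hd := integrable_pow_mul_minDensity (e + 2) 0
  have hxd := integrable_pow_mul_minDensity (e + 2) 1
  have hx2d := integrable_pow_mul_minDensity (e + 2) 2
  have hxw := integrable_pow_mul_tailWeight 1 e
  simp only [pow_zero, pow_one, one_mul] at hd hxd hxw
  have hderiv (x : ℝ) : HasDerivAt (fun y => y * minDensity (e + 2) y)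
      (minDensity (e + 2) x - x ^ 2 * minDensity (e + 2) x
        - ((e : ℝ) + 2) * (e + 1) * (x * tailWeight e x)) x :=
    ((hasDerivAt_id x).mul (hasDerivAt_minDensity e x)).congr_deriv (by simp only [id]; ring)
  have h := integral_eq_zero_of_hasDerivAt_of_integrable hderiv
    ((hd.sub hx2d).sub (hxw.const_mul _)) hxd
  rw [integral_sub (hd.sub' hx2d) (hxw.const_mul _), integral_sub hd hx2d, integral_const_mul,
    integral_minDensity (by omega)] at h
  rw [integral_minLaw (by omega) fun x => x ^ 2]
  linarith

lemma integral_tailWeight_pos (e : ℕ) : 0 < ∫ x, tailWeight e x :=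
  integral_pos_of_integrable_nonneg_nonzero (x := 0) (continuous_tailWeight e)
    (by simpa using integrable_pow_mul_tailWeight 0 e) (fun x => (tailWeight_pos e x).le)
    (tailWeight_pos e 0).ne'

lemma mul_tailWeight_add_comp_neg (e : ℕ) (x : ℝ) :
    x * tailWeight e x + -x * tailWeight e (-x)
      = φ x ^ 2 * (x * (gaussianTail x ^ e - gaussianTail (-x) ^ e)) := by
  simp only [tailWeight, gaussianPDFReal_zero_one_neg]
  ring

lemma mul_tailWeight_add_comp_neg_nonpos (e : ℕ) (x : ℝ) :
    x * tailWeight e x + -x * tailWeight e (-x) ≤ 0 := by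
  rw [mul_tailWeight_add_comp_neg]
  exact mul_nonpos_of_nonneg_of_nonpos (sq_nonneg _)
    ((antitone_gaussianTail_pow e).mul_sub_comp_neg_nonpos x)

lemma mul_tailWeight_add_comp_neg_neg {e : ℕ} (he : e ≠ 0) {x : ℝ} (hx : x ≠ 0) :
    x * tailWeight e x + -x * tailWeight e (-x) < 0 := by
  rw [mul_tailWeight_add_comp_neg]
  exact mul_neg_of_pos_of_neg (pow_pos (gaussianPDFReal_pos 0 1 x one_ne_zero) 2)
    ((strictAnti_gaussianTail_pow he).mul_sub_comp_neg_neg hx)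

lemma integral_mul_tailWeight_nonpos (e : ℕ) : ∫ x, x * tailWeight e x ≤ 0 := by
  have hint : Integrable fun x => x * tailWeight e x := by
    simpa using integrable_pow_mul_tailWeight 1 e
  have hsym := integral_add_comp_neg hint
  rw [smul_eq_mul] at hsym
  have := integral_nonpos (μ := volume) (mul_tailWeight_add_comp_neg_nonpos e)
  linarith

lemma integral_mul_tailWeight_neg {e : ℕ} (he : e ≠ 0) : ∫ x, x * tailWeight e x < 0 := by
  have hint : Integrable fun x => x * tailWeight e x := by
    simpa using integrable_pow_mul_tailWeight 1 e
  have hsym := integral_add_comp_neg hint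
  rw [smul_eq_mul] at hsym
  have hpos : 0 < ∫ x, -(x * tailWeight e x + -x * tailWeight e (-x)) :=
    integral_pos_of_integrable_nonneg_nonzero (x := 1) (by fun_prop) (hint.add hint.comp_neg).neg
      (fun x => neg_nonneg.2 (mul_tailWeight_add_comp_neg_nonpos e x))
      (neg_ne_zero.2 (mul_tailWeight_add_comp_neg_neg he one_ne_zero).ne)
  rw [integral_neg] at hpos
  linarith

end

lemma integral_id_minLaw_neg (e : ℕ) : ∫ x, x ∂minLaw (e + 2) < 0 := by
  rw [integral_id_minLaw]
  exact mul_neg_of_neg_of_pos (neg_neg_of_pos (by positivity)) (integral_tailWeight_pos e)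

lemma one_le_integral_sq_minLaw (e : ℕ) : 1 ≤ ∫ x, x ^ 2 ∂minLaw (e + 2) := by
  rw [integral_sq_minLaw_s15]
  have := mul_nonpos_of_nonneg_of_nonpos (by positivity : (0 : ℝ) ≤ (e + 2) * (e + 1))
    (integral_mul_tailWeight_nonpos e)
  linarith

lemma one_lt_integral_sq_minLaw (e : ℕ) : 1 < ∫ x, x ^ 2 ∂minLaw (e + 3) := by
  rw [integral_sq_minLaw_s15 (e + 1)]
  have := mul_neg_of_pos_of_neg (by positivity : (0 : ℝ) < (↑(e + 1) + 2) * (↑(e + 1) + 1))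
    (integral_mul_tailWeight_neg e.succ_ne_zero)
  linarith

/-- If `λ ≥ 2` and `0 < c < 1`, or `λ ≥ 3` and `0 < c ≤ 1`, then
`2(1−c) E(N_{1:λ})² + c (E(N_{1:λ}²) − 1) > 0`; consequently the divergence rate
`(1/(2 d_σ n)) (2(1−c) E(N_{1:λ})² + c (E(N_{1:λ}²) − 1))` of the step-size of the
`(1,λ)`-CSA-ES is strictly positive for any `d_σ > 0` and `n ≥ 1`. -/
theorem stmt_15 {lam : ℕ} {c : ℝ}
    (h : (2 ≤ lam ∧ 0 < c ∧ c < 1) ∨ (3 ≤ lam ∧ 0 < c ∧ c ≤ 1)) :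
    0 < 2 * (1 - c) * (∫ x, x ∂(minLaw lam)) ^ 2 +
      c * ((∫ x, x ^ 2 ∂(minLaw lam)) - 1) ∧
    ∀ d : ℝ, 0 < d → ∀ n : ℕ, 1 ≤ n →
      0 < (1 / (2 * d * n)) * (2 * (1 - c) * (∫ x, x ∂(minLaw lam)) ^ 2 +
        c * ((∫ x, x ^ 2 ∂(minLaw lam)) - 1)) := by
  have hrate : 0 < 2 * (1 - c) * (∫ x, x ∂(minLaw lam)) ^ 2 +
      c * ((∫ x, x ^ 2 ∂(minLaw lam)) - 1) := by
    rcases h with ⟨hlam, hc, hc1⟩ | ⟨hlam, hc, hc1⟩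
    · obtain ⟨e, rfl⟩ := Nat.exists_eq_add_of_le' hlam
      have hmean := integral_id_minLaw_neg e
      have hsq := one_le_integral_sq_minLaw e
      nlinarith [mul_pos (sub_pos.2 hc1) (pow_pos (neg_pos.2 hmean) 2)]
    · obtain ⟨e, rfl⟩ := Nat.exists_eq_add_of_le' hlam
      have hsq := one_lt_integral_sq_minLaw e
      nlinarith [mul_nonneg (sub_nonneg.2 hc1) (sq_nonneg (∫ x, x ∂minLaw (e + 3)))]
  refine ⟨hrate, fun d hd n hn => mul_pos ?_ hrate⟩
  have : (0 : ℝ) < n := by exact_mod_cast hn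
  positivity
end
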